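/- arXiv:2309.08985 — 7 statements merged into one kernel-verified Lean document; each statement's English description precedes it below -/
import Mathlib

section
/- Let f, f†, f‡ be probability density functions on ℝ with f(y) = q·f†(y) + (1−q)·f‡(y) for some q ∈ (0,1), and let y_q satisfy ∫_{−∞}^{y_q} f(y) dy = q. Then (1/q)·∫_{−∞}^{y_q} y·f(y) dy ≤ ∫ y·f†(y) dy. -/
/-!
Write `f = q f† + (1 - q) f‡`. The quantile equation together with `∫ f† = 1` says that the mass
`(1 - q) f‡` puts below `y_q` equals the mass `q f†` puts above `y_q`. Replacing `y` by `y_q` in the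
truncated moment of `f‡` can only increase it; the result is `y_q` times that common mass, which is
at most the upper-tail moment of `q f†`. Together with the lower part of `q f†` this gives `q ∫ y f†`.
-/

open MeasureTheory Set

section

variable {μ : Measure ℝ} {g : ℝ → ℝ} (a : ℝ)

theorem setIntegral_Iic_mul_le (hg : ∀ y, 0 ≤ g y) (hg_int : IntegrableOn g (Iic a) μ)
    (hg_mom : IntegrableOn (fun y => y * g y) (Iic a) μ) :
    ∫ y in Iic a, y * g y ∂μ ≤ a * ∫ y in Iic a, g y ∂μ := by
  rw [← integral_const_mul]
  exact setIntegral_mono_on hg_mom (hg_int.const_mul a) measurableSet_Iic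
    fun y hy => mul_le_mul_of_nonneg_right hy (hg y)

theorem mul_setIntegral_Ioi_le (hg : ∀ y, 0 ≤ g y) (hg_int : IntegrableOn g (Ioi a) μ)
    (hg_mom : IntegrableOn (fun y => y * g y) (Ioi a) μ) :
    a * ∫ y in Ioi a, g y ∂μ ≤ ∫ y in Ioi a, y * g y ∂μ := by
  rw [← integral_const_mul]
  exact setIntegral_mono_on (hg_int.const_mul a) hg_mom measurableSet_Ioi
    fun y hy => mul_le_mul_of_nonneg_right (le_of_lt hy) (hg y)

end

theorem setIntegral_eq_of_forall_eq_add {μ : Measure ℝ} {s : Set ℝ} {F G H : ℝ → ℝ} {a b : ℝ}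
    (hG : IntegrableOn G s μ) (hH : IntegrableOn H s μ) (hF : ∀ y, F y = a * G y + b * H y) :
    ∫ y in s, F y ∂μ = a * ∫ y in s, G y ∂μ + b * ∫ y in s, H y ∂μ := by
  simp_rw [hF]
  rw [integral_add (hG.const_mul a) (hH.const_mul b), integral_const_mul, integral_const_mul]

theorem lee_trimming_lower_general
    (f fdag fddag : ℝ → ℝ) (q yq : ℝ)
    (hq : q ∈ Set.Ioo (0:ℝ) 1)
    (hfdag_nonneg : ∀ y, 0 ≤ fdag y)
    (hfddag_nonneg : ∀ y, 0 ≤ fddag y)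
    (hfdag_int : Integrable fdag) (hfddag_int : Integrable fddag)
    (hfdag_mass : ∫ y, fdag y = 1)
    (hfdag_mom : Integrable (fun y => y * fdag y))
    (hfddag_mom : Integrable (fun y => y * fddag y))
    (hmix : ∀ y, f y = q * fdag y + (1 - q) * fddag y)
    (hquant : ∫ y in Set.Iic yq, f y = q) :
    (1 / q) * ∫ y in Set.Iic yq, y * f y ≤ ∫ y, y * fdag y := by
  obtain ⟨hq0, hq1⟩ := hq
  have hmass_split := intervalIntegral.integral_Iic_add_Ioi (b := yq)
    hfdag_int.integrableOn hfdag_int.integrableOn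
  have hmom_split := intervalIntegral.integral_Iic_add_Ioi (b := yq)
    hfdag_mom.integrableOn hfdag_mom.integrableOn
  have hquant_mix := setIntegral_eq_of_forall_eq_add (s := Iic yq) (a := q) (b := 1 - q)
    hfdag_int.integrableOn hfddag_int.integrableOn hmix
  have hmom_mix := setIntegral_eq_of_forall_eq_add (s := Iic yq) (F := fun y => y * f y)
    (a := q) (b := 1 - q) hfdag_mom.integrableOn hfddag_mom.integrableOn fun y => by rw [hmix]; ring
  have hlow := setIntegral_Iic_mul_le yq hfddag_nonneg hfddag_int.integrableOn
    hfddag_mom.integrableOn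
  have hhigh := mul_setIntegral_Ioi_le yq hfdag_nonneg hfdag_int.integrableOn
    hfdag_mom.integrableOn
  have hbalance : (1 - q) * ∫ y in Iic yq, fddag y = q * ∫ y in Ioi yq, fdag y := by
    linear_combination hquant - hquant_mix - q * hmass_split - q * hfdag_mass
  rw [one_div, inv_mul_le_iff₀ hq0]
  linear_combination hmom_mix + mul_le_mul_of_nonneg_left hlow (sub_nonneg.mpr hq1.le)
    + mul_le_mul_of_nonneg_left hhigh hq0.le + yq * hbalance + q * hmom_split

/-- Lower-trimming half of Lee's (2002) trimming lemma. -/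
theorem lee_trimming_lower
    (f fdag fddag : ℝ → ℝ) (q yq : ℝ)
    (hq : q ∈ Set.Ioo (0:ℝ) 1)
    (hf_nonneg : ∀ y, 0 ≤ f y) (hfdag_nonneg : ∀ y, 0 ≤ fdag y)
    (hfddag_nonneg : ∀ y, 0 ≤ fddag y)
    (hf_int : Integrable f) (hfdag_int : Integrable fdag) (hfddag_int : Integrable fddag)
    (hf_mass : ∫ y, f y = 1) (hfdag_mass : ∫ y, fdag y = 1)
    (hfddag_mass : ∫ y, fddag y = 1)
    (hf_mom : Integrable (fun y => y * f y))
    (hfdag_mom : Integrable (fun y => y * fdag y))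
    (hfddag_mom : Integrable (fun y => y * fddag y))
    (hmix : ∀ y, f y = q * fdag y + (1 - q) * fddag y)
    (hquant : ∫ y in Set.Iic yq, f y = q) :
    (1 / q) * ∫ y in Set.Iic yq, y * f y ≤ ∫ y, y * fdag y :=
  lee_trimming_lower_general f fdag fddag q yq hq hfdag_nonneg hfddag_nonneg hfdag_int hfddag_int
    hfdag_mass hfdag_mom hfddag_mom hmix hquant
end

section
/- Let f, f†, f‡ be probability density functions on ℝ with f(y) = q·f†(y) + (1−q)·f‡(y) for some q ∈ (0,1), and let y_{1−q} satisfy ∫_{y_{1−q}}^{∞} f(y) dy = 1−q. Then (1/(1−q))·∫_{y_{1−q}}^{∞} y·f(y) dy ≥ ∫ y·f‡(y) dy. -/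
/-!
Put `c = y_{1-q}` and `g = 𝟙_{[c, ∞)} f - (1 - q) f‡`. The quantile condition gives `∫ g = 0`,
and the mixture identity gives `g = q f† ≥ 0` on `[c, ∞)`, while `g ≤ 0` below `c`. Hence
`(y - c) g(y) ≥ 0` everywhere, so `∫ y g(y) dy ≥ c ∫ g = 0`: this is the inequality multiplied
by `1 - q`.
-/

open MeasureTheory Set

section TrimmedMoment

variable {μ : Measure ℝ} {c : ℝ}

theorem mul_integral_le_integral_mul_of_sign_change {g : ℝ → ℝ} (hg : Integrable g μ)
    (hg_mom : Integrable (fun y => y * g y) μ) (hg_nonneg : ∀ y, c ≤ y → 0 ≤ g y)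
    (hg_nonpos : ∀ y, y < c → g y ≤ 0) :
    c * ∫ y, g y ∂μ ≤ ∫ y, y * g y ∂μ := by
  rw [← integral_const_mul]
  refine integral_mono (hg.const_mul c) hg_mom fun y => ?_
  rcases le_or_gt c y with hy | hy
  · exact mul_le_mul_of_nonneg_right hy (hg_nonneg y hy)
  · exact mul_le_mul_of_nonpos_right hy.le (hg_nonpos y hy)

theorem integral_mul_le_setIntegral_Ici_mul_of_le {f h : ℝ → ℝ}
    (hf : IntegrableOn f (Ici c) μ) (hf_mom : IntegrableOn (fun y => y * f y) (Ici c) μ)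
    (hh : Integrable h μ) (hh_mom : Integrable (fun y => y * h y) μ)
    (hh_nonneg : ∀ y, 0 ≤ h y) (hhf : ∀ y, c ≤ y → h y ≤ f y)
    (hmass : ∫ y in Ici c, f y ∂μ = ∫ y, h y ∂μ) :
    ∫ y, y * h y ∂μ ≤ ∫ y in Ici c, y * f y ∂μ := by
  set g : ℝ → ℝ := fun y => (Ici c).indicator f y - h y
  have hg_mom_eq :
      (fun y => y * g y) = fun y => (Ici c).indicator (fun y => y * f y) y - y * h y := by
    funext y
    by_cases hy : y ∈ Ici c <;> simp [g, hy, mul_sub]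
  have hg : Integrable g μ := (hf.integrable_indicator measurableSet_Ici).sub hh
  have hg_mom : Integrable (fun y => y * g y) μ := by
    rw [hg_mom_eq]; exact (hf_mom.integrable_indicator measurableSet_Ici).sub hh_mom
  have hg_integral : ∫ y, g y ∂μ = 0 := by
    rw [integral_sub (hf.integrable_indicator measurableSet_Ici) hh,
      integral_indicator measurableSet_Ici, hmass, sub_self]
  have hmoment := mul_integral_le_integral_mul_of_sign_change hg hg_mom
    (fun y hy => by simpa [g, indicator_of_mem (show y ∈ Ici c from hy)] using hhf y hy)
    (fun y hy => by
      simpa [g, indicator_of_notMem (show y ∉ Ici c from not_le.mpr hy)] using hh_nonneg y)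
  rw [hg_integral, mul_zero, hg_mom_eq,
    integral_sub (hf_mom.integrable_indicator measurableSet_Ici) hh_mom,
    integral_indicator measurableSet_Ici] at hmoment
  linarith

end TrimmedMoment

theorem lee_trimming_upper_general
    (f fdag fddag : ℝ → ℝ) (q y1q : ℝ)
    (hq : q ∈ Set.Ioo (0:ℝ) 1)
    (hfdag_nonneg : ∀ y, 0 ≤ fdag y)
    (hfddag_nonneg : ∀ y, 0 ≤ fddag y)
    (hf_int : Integrable f) (hfddag_int : Integrable fddag)
    (hfddag_mass : ∫ y, fddag y = 1)
    (hf_mom : Integrable (fun y => y * f y))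
    (hfddag_mom : Integrable (fun y => y * fddag y))
    (hmix : ∀ y, f y = q * fdag y + (1 - q) * fddag y)
    (hquant : ∫ y in Set.Ici y1q, f y = 1 - q) :
    (1 / (1 - q)) * ∫ y in Set.Ici y1q, y * f y ≥ ∫ y, y * fddag y := by
  obtain ⟨hq0, hq1⟩ := hq
  have h1q : 0 < 1 - q := sub_pos.mpr hq1
  have hmoment := integral_mul_le_setIntegral_Ici_mul_of_le (c := y1q)
    (h := fun y => (1 - q) * fddag y)
    hf_int.integrableOn hf_mom.integrableOn (hfddag_int.const_mul _)
    (by simpa only [mul_left_comm] using hfddag_mom.const_mul (1 - q))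
    (fun y => mul_nonneg h1q.le (hfddag_nonneg y))
    (fun y _ => by rw [hmix y]; linarith [mul_nonneg hq0.le (hfdag_nonneg y)])
    (by rw [integral_const_mul, hfddag_mass, mul_one, hquant])
  simp only [mul_left_comm _ (1 - q), integral_const_mul] at hmoment
  rw [ge_iff_le, one_div_mul_eq_div, le_div_iff₀ h1q]
  linarith

/-- Upper-trimming half of Lee's (2002) trimming lemma. -/
theorem lee_trimming_upper
    (f fdag fddag : ℝ → ℝ) (q y1q : ℝ)
    (hq : q ∈ Set.Ioo (0:ℝ) 1)
    (hf_nonneg : ∀ y, 0 ≤ f y) (hfdag_nonneg : ∀ y, 0 ≤ fdag y)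
    (hfddag_nonneg : ∀ y, 0 ≤ fddag y)
    (hf_int : Integrable f) (hfdag_int : Integrable fdag) (hfddag_int : Integrable fddag)
    (hf_mass : ∫ y, f y = 1) (hfdag_mass : ∫ y, fdag y = 1)
    (hfddag_mass : ∫ y, fddag y = 1)
    (hf_mom : Integrable (fun y => y * f y))
    (hfdag_mom : Integrable (fun y => y * fdag y))
    (hfddag_mom : Integrable (fun y => y * fddag y))
    (hmix : ∀ y, f y = q * fdag y + (1 - q) * fddag y)
    (hquant : ∫ y in Set.Ici y1q, f y = 1 - q) :
    (1 / (1 - q)) * ∫ y in Set.Ici y1q, y * f y ≥ ∫ y, y * fddag y :=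
  lee_trimming_upper_general f fdag fddag q y1q hq hfdag_nonneg hfddag_nonneg hf_int hfddag_int
    hfddag_mass hf_mom hfddag_mom hmix hquant
end

section
/- Suppose (S, D) are binary random variables and X a random variable such that S(1), S(0) are potential responses with S = S(D), D ⊥ (S(0), S(1), X), and P(D=1|X=x) = p(x) ∈ (0,1). Assume P(S=1|D=d,X=x) = P(S(d)=1|X=x) for d ∈ {0,1}. Then q(x) := P(S(0)=1|X=x)/P(S(1)=1|X=x) = [p(x)·P(D=0|S=1,X=x)] / [(1−p(x))·P(D=1|S=1,X=x)]. -/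
/-!
Bayes' rule in odds form: among responders with `X = x`, the odds of control against treatment
are the prior odds `(1 - p x) / p x` times the likelihood ratio `P(S(0)=1|x) / P(S(1)=1|x)`.
Multiplying by `p x / (1 - p x)` leaves `q(x)`.
-/

open MeasureTheory Set ProbabilityTheory

namespace ProbabilityTheory

variable {Ω : Type*} [MeasurableSpace Ω] {μ : Measure Ω} [IsFiniteMeasure μ] {s t u : Set Ω}

lemma toReal_measure_inter_eq_mul_cond (hs : MeasurableSet s) (t : Set Ω) :
    (μ (s ∩ t)).toReal = (μ s).toReal * (μ[t | s]).toReal := by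
  rw [← cond_mul_eq_inter hs t μ, ENNReal.toReal_mul, mul_comm]

lemma toReal_cond_div_toReal_cond (ht : MeasurableSet t) (hu : MeasurableSet u) (s : Set Ω) :
    (μ[u | s]).toReal / (μ[t | s]).toReal = (μ (s ∩ u)).toReal / (μ (s ∩ t)).toReal := by
  rcases eq_or_ne (μ s) 0 with hs | hs
  · simp [cond_eq_zero_of_meas_eq_zero hs, measure_inter_null_of_null_left _ hs]
  · have hinv : (μ s).toReal⁻¹ ≠ 0 :=
      inv_ne_zero (ENNReal.toReal_ne_zero.mpr ⟨hs, measure_ne_top μ s⟩)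
    rw [cond_apply' hu, cond_apply' ht, ENNReal.toReal_mul, ENNReal.toReal_mul,
      ENNReal.toReal_inv, mul_div_mul_left _ _ hinv]

end ProbabilityTheory

theorem trimming_prob_missing_covariates_general
    {Ω 𝒳 : Type*} [MeasurableSpace Ω] [MeasurableSpace 𝒳] [MeasurableSingletonClass 𝒳]
    (μ : Measure Ω) [IsProbabilityMeasure μ]
    (D S S0 S1 : Set Ω) (X : Ω → 𝒳) (x : 𝒳) (p : 𝒳 → ℝ)
    (hD : MeasurableSet D)
    (hX : Measurable X)
    (hXx : μ (X ⁻¹' {x}) ≠ 0)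
    (hp : p x = ((μ[|X ⁻¹' {x}]) D).toReal)
    (hp01 : p x ∈ Set.Ioo (0:ℝ) 1)
    (hc1 : (μ[|D ∩ X ⁻¹' {x}]) S = (μ[|X ⁻¹' {x}]) S1)
    (hc0 : (μ[|Dᶜ ∩ X ⁻¹' {x}]) S = (μ[|X ⁻¹' {x}]) S0) :
    ((μ[|X ⁻¹' {x}]) S0).toReal / ((μ[|X ⁻¹' {x}]) S1).toReal
      = (p x * ((μ[|S ∩ X ⁻¹' {x}]) Dᶜ).toReal)
        / ((1 - p x) * ((μ[|S ∩ X ⁻¹' {x}]) D).toReal) := by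
  set A := X ⁻¹' {x}
  have hA : MeasurableSet A := hX (measurableSet_singleton x)
  have hμA : (μ A).toReal ≠ 0 := ENNReal.toReal_ne_zero.mpr ⟨hXx, measure_ne_top μ A⟩
  have : IsProbabilityMeasure μ[|A] := cond_isProbabilityMeasure hXx
  have hpc : (μ[Dᶜ | A]).toReal = 1 - p x := by
    rw [hp]; exact probReal_compl_eq_one_sub hD
  have hresp1 : (μ (S ∩ A ∩ D)).toReal = (μ A).toReal * p x * (μ[S1 | A]).toReal := by
    rw [show S ∩ A ∩ D = D ∩ A ∩ S by ac_rfl, toReal_measure_inter_eq_mul_cond (hD.inter hA),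
      hc1, inter_comm, toReal_measure_inter_eq_mul_cond hA, hp]
  have hresp0 : (μ (S ∩ A ∩ Dᶜ)).toReal = (μ A).toReal * (1 - p x) * (μ[S0 | A]).toReal := by
    rw [show S ∩ A ∩ Dᶜ = Dᶜ ∩ A ∩ S by ac_rfl,
      toReal_measure_inter_eq_mul_cond (hD.compl.inter hA),
      hc0, inter_comm, toReal_measure_inter_eq_mul_cond hA, hpc]
  rw [mul_div_mul_comm, toReal_cond_div_toReal_cond hD hD.compl, hresp1, hresp0]
  have hp0 : p x ≠ 0 := hp01.1.ne'
  have hp1 : 1 - p x ≠ 0 := (sub_pos.mpr hp01.2).ne'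
  field_simp

/-- The trimming probability `q(x) = P(S(0)=1|X=x)/P(S(1)=1|X=x)` is identified
by the conditional treatment probabilities among responders. -/
theorem trimming_prob_missing_covariates
    {Ω 𝒳 : Type*} [MeasurableSpace Ω] [MeasurableSpace 𝒳] [MeasurableSingletonClass 𝒳]
    (μ : Measure Ω) [IsProbabilityMeasure μ]
    (D S S0 S1 : Set Ω) (X : Ω → 𝒳) (x : 𝒳) (p : 𝒳 → ℝ)
    (hD : MeasurableSet D) (hS0 : MeasurableSet S0) (hS1 : MeasurableSet S1)
    (hX : Measurable X)
    (hS : S = (D ∩ S1) ∪ (Dᶜ ∩ S0))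
    (hXx : μ (X ⁻¹' {x}) ≠ 0)
    (hp : p x = ((μ[|X ⁻¹' {x}]) D).toReal)
    (hp01 : p x ∈ Set.Ioo (0:ℝ) 1)
    (hc1 : (μ[|D ∩ X ⁻¹' {x}]) S = (μ[|X ⁻¹' {x}]) S1)
    (hc0 : (μ[|Dᶜ ∩ X ⁻¹' {x}]) S = (μ[|X ⁻¹' {x}]) S0)
    (hS1pos : 0 < ((μ[|X ⁻¹' {x}]) S1).toReal)
    (hS0pos : 0 < ((μ[|X ⁻¹' {x}]) S0).toReal)
    (hSD1 : 0 < ((μ[|S ∩ X ⁻¹' {x}]) D).toReal) :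
    ((μ[|X ⁻¹' {x}]) S0).toReal / ((μ[|X ⁻¹' {x}]) S1).toReal
      = (p x * ((μ[|S ∩ X ⁻¹' {x}]) Dᶜ).toReal)
        / ((1 - p x) * ((μ[|S ∩ X ⁻¹' {x}]) D).toReal) :=
  trimming_prob_missing_covariates_general μ D S S0 S1 X x p hD hX hXx hp hp01 hc1 hc0
end

section
/- Let D, S be binary with D independent of X (randomization), p = P(D=1) ∈ (0,1), and let Y be real-valued observed when S=1. Define the orthogonalized moment m̃ = S·D·1{Y ≤ t} − S·(1−D)·p/(1−p). If t is chosen so that P(Y ≤ t | S=1, D=1)·P(S=1|D=1) = P(S=1|D=0), then E[m̃] = 0. -/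
open MeasureTheory Set ProbabilityTheory

/-- The orthogonalized quantile moment condition has mean zero at the true
trimming threshold. -/
theorem orthogonalized_moment_mean_zero
    {Ω : Type*} [MeasurableSpace Ω] (μ : Measure Ω) [IsProbabilityMeasure μ]
    (D S : Set Ω) (Y : Ω → ℝ) (t p : ℝ)
    (hD : MeasurableSet D) (hS : MeasurableSet S) (hY : Measurable Y)
    (hp : p = (μ D).toReal) (hp01 : p ∈ Set.Ioo (0:ℝ) 1)
    (hSD : μ (S ∩ D) ≠ 0)
    (hthr : ((μ[|S ∩ D]) {ω | Y ω ≤ t}).toReal * ((μ[|D]) S).toReal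
        = ((μ[|Dᶜ]) S).toReal) :
    ∫ ω, (S.indicator (fun _ => (1:ℝ)) ω * D.indicator (fun _ => (1:ℝ)) ω
          * ({ω' | Y ω' ≤ t}).indicator (fun _ => (1:ℝ)) ω
        - S.indicator (fun _ => (1:ℝ)) ω * Dᶜ.indicator (fun _ => (1:ℝ)) ω
          * p / (1 - p)) ∂μ = 0 := by
  have hYt : MeasurableSet {ω | Y ω ≤ t} := measurableSet_le hY measurable_const
  set A := S ∩ D ∩ {ω | Y ω ≤ t} with hAdef
  set B := S ∩ Dᶜ with hBdef
  have hA : MeasurableSet A := (hS.inter hD).inter hYt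
  have hB : MeasurableSet B := hS.inter hD.compl
  have hfun : ∀ ω, (S.indicator (fun _ => (1:ℝ)) ω * D.indicator (fun _ => (1:ℝ)) ω
          * ({ω' | Y ω' ≤ t}).indicator (fun _ => (1:ℝ)) ω
        - S.indicator (fun _ => (1:ℝ)) ω * Dᶜ.indicator (fun _ => (1:ℝ)) ω
          * p / (1 - p))
      = A.indicator (fun _ => (1:ℝ)) ω - B.indicator (fun _ => (1:ℝ)) ω * (p / (1 - p)) := by
    intro ω
    simp only [Set.indicator_apply, hAdef, hBdef, Set.mem_inter_iff, Set.mem_setOf_eq,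
      Set.mem_compl_iff]
    by_cases h1 : ω ∈ S <;> by_cases h2 : ω ∈ D <;> by_cases h3 : Y ω ≤ t <;>
      simp [h1, h2, h3]
  rw [integral_congr_ae (Filter.Eventually.of_forall hfun), integral_sub
    ((integrable_const (1:ℝ)).indicator hA)
    (((integrable_const (1:ℝ)).indicator hB).mul_const _),
    MeasureTheory.integral_mul_const, integral_indicator_const (1:ℝ) hA, integral_indicator_const (1:ℝ) hB]
  simp only [smul_eq_mul, mul_one]
  simp only [measureReal_def]
  -- now pure algebra
  have hane : (μ (S ∩ D)).toReal ≠ 0 :=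
    ENNReal.toReal_ne_zero.mpr ⟨hSD, measure_ne_top _ _⟩
  have hDc : (μ Dᶜ).toReal = 1 - p := by
    rw [prob_compl_eq_one_sub hD, ENNReal.toReal_sub_of_le prob_le_one ENNReal.one_ne_top,
      ENNReal.toReal_one, hp]
  rw [cond_apply (hS.inter hD), cond_apply hD, cond_apply hD.compl] at hthr
  simp only [ENNReal.toReal_mul, ENNReal.toReal_inv] at hthr
  rw [Set.inter_comm D S, Set.inter_comm Dᶜ S, hDc, ← hp] at hthr
  rw [show S ∩ D ∩ {ω | Y ω ≤ t} = A from rfl, show S ∩ Dᶜ = B from rfl] at hthr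
  have h1p : (1:ℝ) - p ≠ 0 := by linarith [hp01.2]
  have hpne : p ≠ 0 := ne_of_gt hp01.1
  field_simp at hthr ⊢
  nlinarith [hthr, hane, sq_nonneg ((μ (S ∩ D)).toReal)]
end

section
/- Let f₁, f₂ be probability densities on ℝ with finite first moments, and w ∈ (0,1); let f = w f₁ + (1−w) f₂. Fix q₁, q₂ ∈ (0,1) with quantile thresholds t₁, t₂ (the q_i-quantile of f_i), and set q = w q₁ + (1−w) q₂ with y_q the q-quantile of f. Then (1/q)∫_{−∞}^{y_q} y f(y) dy ≤ (w q₁/q)·(1/q₁)∫_{−∞}^{t₁} y f₁(y) dy + ((1−w) q₂/q)·(1/q₂)∫_{−∞}^{t₂} y f₂(y) dy. -/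
/-!
For `f ≥ 0` and any threshold `s`, the half-line `{y ≤ s}` minimises `∫_S (y - s) f(y) dy` over
all sets `S`, since it is exactly where the integrand is nonpositive; in particular it does at least
as well as each component's own trimming set `{y ≤ tᵢ}`. Averaging these two inequalities with
weights `w` and `1 - w` at `s = y_q`, the `y_q` terms cancel because both sides trim the same total
mass `q`.
-/

open MeasureTheory Set

section TrimmedMean

variable {μ : Measure ℝ} {f : ℝ → ℝ}

theorem setIntegral_Iic_sub_mul_le_of_nonneg (hf : ∀ y, 0 ≤ f y) (s t : ℝ)
    (hg : Integrable (fun y => (y - s) * f y) μ) :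
    ∫ y in Iic s, (y - s) * f y ∂μ ≤ ∫ y in Iic t, (y - s) * f y ∂μ := by
  rw [← integral_indicator measurableSet_Iic, ← integral_indicator measurableSet_Iic]
  refine integral_mono (hg.indicator measurableSet_Iic) (hg.indicator measurableSet_Iic) fun y => ?_
  simp only [indicator, mem_Iic]
  split_ifs with hys hyt hyt
  · rfl
  · exact mul_nonpos_of_nonpos_of_nonneg (sub_nonpos.2 hys) (hf y)
  · exact mul_nonneg (sub_nonneg.2 (not_le.1 hys).le) (hf y)
  · rfl

theorem setIntegral_Iic_mul_le_of_nonneg (hf : ∀ y, 0 ≤ f y) (hf_int : Integrable f μ)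
    (hf_mom : Integrable (fun y => y * f y) μ) (s t : ℝ) :
    ∫ y in Iic s, y * f y ∂μ
      ≤ ∫ y in Iic t, y * f y ∂μ + s * ((∫ y in Iic s, f y ∂μ) - ∫ y in Iic t, f y ∂μ) := by
  have hsplit (a : ℝ) : ∫ y in Iic a, (y - s) * f y ∂μ
      = ∫ y in Iic a, y * f y ∂μ - s * ∫ y in Iic a, f y ∂μ := by
    simp only [sub_mul]
    rw [integral_sub hf_mom.integrableOn (hf_int.integrableOn.const_mul s), integral_const_mul]
  have key := setIntegral_Iic_sub_mul_le_of_nonneg hf s t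
    (by simp only [sub_mul]; exact hf_mom.sub (hf_int.const_mul s))
  rw [hsplit, hsplit] at key
  linarith

end TrimmedMean

theorem setIntegral_const_mul_add_const_mul {α : Type*} [MeasurableSpace α] {μ : Measure α}
    {f₁ f₂ : α → ℝ} (s : Set α) (a b : ℝ) (h₁ : Integrable f₁ μ) (h₂ : Integrable f₂ μ) :
    ∫ y in s, (a * f₁ y + b * f₂ y) ∂μ = a * ∫ y in s, f₁ y ∂μ + b * ∫ y in s, f₂ y ∂μ := by
  rw [integral_add (h₁.integrableOn.const_mul a) (h₂.integrableOn.const_mul b),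
    integral_const_mul, integral_const_mul]

theorem two_component_ctb_general
    (f₁ f₂ : ℝ → ℝ) (w q₁ q₂ q t₁ t₂ yq : ℝ)
    (hw : w ∈ Set.Ioo (0:ℝ) 1)
    (hq₁ : q₁ ∈ Set.Ioo (0:ℝ) 1) (hq₂ : q₂ ∈ Set.Ioo (0:ℝ) 1)
    (hf₁_nonneg : ∀ y, 0 ≤ f₁ y) (hf₂_nonneg : ∀ y, 0 ≤ f₂ y)
    (hf₁_int : Integrable f₁) (hf₂_int : Integrable f₂)
    (hf₁_mom : Integrable (fun y => y * f₁ y))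
    (hf₂_mom : Integrable (fun y => y * f₂ y))
    (ht₁ : ∫ y in Set.Iic t₁, f₁ y = q₁)
    (ht₂ : ∫ y in Set.Iic t₂, f₂ y = q₂)
    (hq : q = w * q₁ + (1 - w) * q₂)
    (hyq : ∫ y in Set.Iic yq, (w * f₁ y + (1 - w) * f₂ y) = q) :
    (1 / q) * ∫ y in Set.Iic yq, y * (w * f₁ y + (1 - w) * f₂ y)
      ≤ (w * q₁ / q) * ((1 / q₁) * ∫ y in Set.Iic t₁, y * f₁ y)
        + ((1 - w) * q₂ / q) * ((1 / q₂) * ∫ y in Set.Iic t₂, y * f₂ y) := by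
  obtain ⟨hw₀, hw₁⟩ := hw
  have hq_pos : 0 < q := by nlinarith [hq₁.1, hq₂.1]
  have h₁ := setIntegral_Iic_mul_le_of_nonneg hf₁_nonneg hf₁_int hf₁_mom yq t₁
  have h₂ := setIntegral_Iic_mul_le_of_nonneg hf₂_nonneg hf₂_int hf₂_mom yq t₂
  rw [ht₁] at h₁
  rw [ht₂] at h₂
  rw [setIntegral_const_mul_add_const_mul _ _ _ hf₁_int hf₂_int] at hyq
  have hmom : ∫ y in Iic yq, y * (w * f₁ y + (1 - w) * f₂ y)
      = w * (∫ y in Iic yq, y * f₁ y) + (1 - w) * ∫ y in Iic yq, y * f₂ y := by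
    simp only [mul_add, mul_left_comm _ w, mul_left_comm _ (1 - w)]
    exact setIntegral_const_mul_add_const_mul _ _ _ hf₁_mom hf₂_mom
  calc (1 / q) * ∫ y in Iic yq, y * (w * f₁ y + (1 - w) * f₂ y)
      ≤ (1 / q) * (w * (∫ y in Iic t₁, y * f₁ y) + (1 - w) * ∫ y in Iic t₂, y * f₂ y) := by
        rw [hmom]
        refine mul_le_mul_of_nonneg_left ?_ (by positivity)
        linear_combination w * h₁ + (1 - w) * h₂ + yq * (hyq + hq)
    _ = _ := by field_simp [hq₁.1.ne', hq₂.1.ne']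

/-- Two-component special case of the covariate-tightened trimming bound. -/
theorem two_component_ctb
    (f₁ f₂ : ℝ → ℝ) (w q₁ q₂ q t₁ t₂ yq : ℝ)
    (hw : w ∈ Set.Ioo (0:ℝ) 1)
    (hq₁ : q₁ ∈ Set.Ioo (0:ℝ) 1) (hq₂ : q₂ ∈ Set.Ioo (0:ℝ) 1)
    (hf₁_nonneg : ∀ y, 0 ≤ f₁ y) (hf₂_nonneg : ∀ y, 0 ≤ f₂ y)
    (hf₁_int : Integrable f₁) (hf₂_int : Integrable f₂)
    (hf₁_mass : ∫ y, f₁ y = 1) (hf₂_mass : ∫ y, f₂ y = 1)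
    (hf₁_mom : Integrable (fun y => y * f₁ y))
    (hf₂_mom : Integrable (fun y => y * f₂ y))
    (ht₁ : ∫ y in Set.Iic t₁, f₁ y = q₁)
    (ht₂ : ∫ y in Set.Iic t₂, f₂ y = q₂)
    (hq : q = w * q₁ + (1 - w) * q₂)
    (hyq : ∫ y in Set.Iic yq, (w * f₁ y + (1 - w) * f₂ y) = q) :
    (1 / q) * ∫ y in Set.Iic yq, y * (w * f₁ y + (1 - w) * f₂ y)
      ≤ (w * q₁ / q) * ((1 / q₁) * ∫ y in Set.Iic t₁, y * f₁ y)
        + ((1 - w) * q₂ / q) * ((1 / q₂) * ∫ y in Set.Iic t₂, y * f₂ y) :=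
  two_component_ctb_general f₁ f₂ w q₁ q₂ q t₁ t₂ yq hw hq₁ hq₂ hf₁_nonneg hf₂_nonneg hf₁_int
    hf₂_int hf₁_mom hf₂_mom ht₁ ht₂ hq hyq
end

section
/- Let Y be a real random variable with density f given (S=1, D=1, X=x), let p(x) ∈ (0,1), q₁(x) = P(S=1|D=1,X=x), q₀(x) = P(S=1|D=0,X=x), and t₀ the threshold with q₁(x)·P(Y ≤ t₀|S=1,D=1,X=x) = q₀(x). Define ψ̃(t, θ) = E[ S D (Y − t₀) 1{Y ≤ t} | X=x ] − p(x)·θ + t₀·p(x)·q₀(x). Then ∂/∂t ψ̃(t, θ)|_{t=t₀} = 0 for every θ, provided f is continuous at t₀. -/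
open MeasureTheory Set

/-! The threshold enters the moment only through the weight `y - t₀`, so by the fundamental
theorem of calculus the `t`-derivative of `∫_{y ≤ t} (y - t₀) f(y) dy` at `t₀` is
`(t₀ - t₀) f(t₀) = 0`. -/

theorem hasDerivAt_integral_Iic {E : Type*} [NormedAddCommGroup E] [NormedSpace ℝ E]
    [CompleteSpace E] {g : ℝ → E} {a : ℝ} (hg : Integrable g) (hga : ContinuousAt g a) :
    HasDerivAt (fun t => ∫ y in Iic t, g y) (g a) a := by
  have hFTC : HasDerivAt (fun t => (∫ y in Iic a, g y) + ∫ y in a..t, g y) (g a) a := by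
    simpa using (intervalIntegral.integral_hasDerivAt_right (hg.intervalIntegrable (a := a))
      hg.aestronglyMeasurable.stronglyMeasurableAtFilter hga).const_add (∫ y in Iic a, g y)
  refine hFTC.congr_of_eventuallyEq (Filter.Eventually.of_forall fun t => ?_)
  simp only [← intervalIntegral.integral_Iic_sub_Iic hg.integrableOn hg.integrableOn,
    add_sub_cancel]

theorem MeasureTheory.Integrable.sub_const_mul {f : ℝ → ℝ} (c : ℝ) (hf : Integrable f)
    (hmom : Integrable fun y => y * f y) : Integrable fun y => (y - c) * f y :=
  (hmom.sub (hf.const_mul c)).congr (.of_forall fun y => (sub_mul y c (f y)).symm)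

theorem neyman_orthogonality_psi_tilde_general
    (f : ℝ → ℝ) (t₀ px q₁x q₀x : ℝ) (ψ : ℝ → ℝ → ℝ)
    (hf_int : Integrable f)
    (hf_mom : Integrable (fun y => y * f y))
    (hcont : ContinuousAt f t₀)
    (hψ : ∀ t θ, ψ t θ
        = px * q₁x * (∫ y in Set.Iic t, (y - t₀) * f y) - px * θ + t₀ * px * q₀x) :
    ∀ θ : ℝ, HasDerivAt (fun t => ψ t θ) 0 t₀ := by
  intro θ
  have hmoment : HasDerivAt (fun t => ∫ y in Iic t, (y - t₀) * f y) ((t₀ - t₀) * f t₀) t₀ :=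
    hasDerivAt_integral_Iic (hf_int.sub_const_mul t₀ hf_mom)
      ((continuousAt_id.sub continuousAt_const).mul hcont)
  have hψθ := ((hmoment.const_mul (px * q₁x)).sub_const (px * θ)).add_const (t₀ * px * q₀x)
  rw [sub_self, zero_mul, mul_zero] at hψθ
  simpa only [hψ] using hψθ

/-- Neyman orthogonality of the orthogonalized lower-bound moment `ψ̃⁽²⁾` with
respect to the quantile nuisance: the derivative of the conditional moment in
the trimming threshold vanishes at the truth, for every `θ`. -/
theorem neyman_orthogonality_psi_tilde
    (f : ℝ → ℝ) (t₀ px q₁x q₀x : ℝ) (ψ : ℝ → ℝ → ℝ)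
    (hf_nonneg : ∀ y, 0 ≤ f y)
    (hf_int : Integrable f)
    (hf_mass : ∫ y, f y = 1)
    (hf_mom : Integrable (fun y => y * f y))
    (hcont : ContinuousAt f t₀)
    (hpx : px ∈ Set.Ioo (0:ℝ) 1)
    (hq₁ : q₁x ∈ Set.Ioo (0:ℝ) 1) (hq₀ : q₀x ∈ Set.Ioo (0:ℝ) 1)
    (hthr : q₁x * ∫ y in Set.Iic t₀, f y = q₀x)
    (hψ : ∀ t θ, ψ t θ
        = px * q₁x * (∫ y in Set.Iic t, (y - t₀) * f y) - px * θ + t₀ * px * q₀x) :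
    ∀ θ : ℝ, HasDerivAt (fun t => ψ t θ) 0 t₀ :=
  neyman_orthogonality_psi_tilde_general f t₀ px q₁x q₀x ψ hf_int hf_mom hcont hψ
end

section
/- Let f be a probability density on ℝ with finite first moment, strictly positive on an interval containing its q-quantile y_q for q ∈ (0,1). If f restricted to (−∞, y_q] is not a point mass, then the inequality in the trimming lemma is strict: for any density f† with f = q f† + (1−q) f‡ (f‡ a density) and f† not supported entirely in (−∞, y_q], we have (1/q)∫_{−∞}^{y_q} y f(y) dy < ∫ y f†(y) dy. -/
open MeasureTheory Set Function

/-!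
Put `g = 𝟙_{(-∞, y_q]} f / q`. Since `q f† ≤ f`, we have `f† ≤ g` below `y_q` and `g = 0 ≤ f†`
above it, and both have unit mass. Hence `∫ y (f† - g) = ∫ (y - y_q) (f† - g)`, whose integrand
is nonnegative everywhere and positive wherever `f†` lives above `y_q`.
-/

theorem setIntegral_Ioi_sub_mul_pos {μ : Measure ℝ} {w : ℝ → ℝ} {c : ℝ}
    (hw : ∀ y > c, 0 ≤ w y) (hwi : IntegrableOn w (Ioi c) μ)
    (hcw : IntegrableOn (fun y => (y - c) * w y) (Ioi c) μ)
    (hpos : 0 < ∫ y in Ioi c, w y ∂μ) :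
    0 < ∫ y in Ioi c, (y - c) * w y ∂μ := by
  have hsupp : support (fun y => (y - c) * w y) ∩ Ioi c = support w ∩ Ioi c := by
    ext y
    simp only [mem_inter_iff, mem_support, mem_Ioi, ne_eq, mul_eq_zero, not_or]
    exact ⟨fun h => ⟨h.1.2, h.2⟩, fun h => ⟨⟨sub_ne_zero.2 h.2.ne', h.1⟩, h.2⟩⟩
  rw [setIntegral_pos_iff_support_of_nonneg_ae _ hwi] at hpos
  · rwa [setIntegral_pos_iff_support_of_nonneg_ae _ hcw, hsupp]
    exact (ae_restrict_iff' measurableSet_Ioi).2 <| ae_of_all _ fun y hy =>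
      mul_nonneg (sub_nonneg.2 (le_of_lt hy)) (hw y hy)
  · exact (ae_restrict_iff' measurableSet_Ioi).2 <| ae_of_all _ hw

theorem integral_id_mul_lt_of_single_crossing {μ : Measure ℝ} {u v : ℝ → ℝ} {c : ℝ}
    (hu : Integrable u μ) (hv : Integrable v μ)
    (hyu : Integrable (fun y => y * u y) μ) (hyv : Integrable (fun y => y * v y) μ)
    (hmass : ∫ y, u y ∂μ = ∫ y, v y ∂μ)
    (hle : ∀ y ≤ c, u y ≤ v y) (hge : ∀ y > c, v y ≤ u y)
    (hpos : 0 < ∫ y in Ioi c, (u y - v y) ∂μ) :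
    ∫ y, y * v y ∂μ < ∫ y, y * u y ∂μ := by
  have hmom : Integrable (fun y => y * u y - y * v y) μ := hyu.sub hyv
  have hmass' : Integrable (fun y => c * (u y - v y)) μ := (hu.sub hv).const_mul c
  -- `∫ u = ∫ v` lets us shift the first moment to the crossing point `c`.
  have hshift : ∫ y, (y - c) * (u y - v y) ∂μ = ∫ y, y * u y ∂μ - ∫ y, y * v y ∂μ := by
    calc ∫ y, (y - c) * (u y - v y) ∂μ
        = ∫ y, (y * u y - y * v y) - c * (u y - v y) ∂μ := by congr 1; ext y; ring
      _ = (∫ y, y * u y ∂μ - ∫ y, y * v y ∂μ) - c * (∫ y, u y ∂μ - ∫ y, v y ∂μ) := by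
          rw [integral_sub hmom hmass', integral_sub hyu hyv,
            integral_const_mul, integral_sub hu hv]
      _ = ∫ y, y * u y ∂μ - ∫ y, y * v y ∂μ := by rw [hmass, sub_self, mul_zero, sub_zero]
  have hint : Integrable (fun y => (y - c) * (u y - v y)) μ :=
    (hmom.sub hmass').congr <| ae_of_all _ fun y => by simp only [Pi.sub_apply]; ring
  have hlower : 0 ≤ ∫ y in Iic c, (y - c) * (u y - v y) ∂μ :=
    setIntegral_nonneg measurableSet_Iic fun y hy =>
      mul_nonneg_of_nonpos_of_nonpos (sub_nonpos.2 hy) (sub_nonpos.2 (hle y hy))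
  have hupper : 0 < ∫ y in Ioi c, (y - c) * (u y - v y) ∂μ :=
    setIntegral_Ioi_sub_mul_pos (fun y hy => sub_nonneg.2 (hge y hy))
      (hu.sub hv).integrableOn hint.integrableOn hpos
  rw [← sub_pos, ← hshift, ← intervalIntegral.integral_Iic_add_Ioi hint.integrableOn
    hint.integrableOn]
  linarith

theorem lee_trimming_lower_strict_general
    (f fdag fddag : ℝ → ℝ) (q yq : ℝ)
    (hq : q ∈ Set.Ioo (0:ℝ) 1)
    (hfdag_nonneg : ∀ y, 0 ≤ fdag y)
    (hfddag_nonneg : ∀ y, 0 ≤ fddag y)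
    (hf_int : Integrable f) (hfdag_int : Integrable fdag)
    (hfdag_mass : ∫ y, fdag y = 1)
    (hf_mom : Integrable (fun y => y * f y))
    (hfdag_mom : Integrable (fun y => y * fdag y))
    (hmix : ∀ y, f y = q * fdag y + (1 - q) * fddag y)
    (hquant : ∫ y in Set.Iic yq, f y = q)
    (hmass_above : 0 < ∫ y in Set.Ioi yq, fdag y) :
    (1 / q) * ∫ y in Set.Iic yq, y * f y < ∫ y, y * fdag y := by
  obtain ⟨hq0, hq1⟩ := hq
  set g := (Iic yq).indicator fun y => f y / q with hg
  have hyg : (fun y => y * g y) = (Iic yq).indicator fun y => y * f y / q := by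
    ext y; by_cases hy : y ∈ Iic yq <;> simp [g, hy, mul_div_assoc]
  have hg_mass : ∫ y, g y = ∫ y, fdag y := by
    rw [integral_indicator measurableSet_Iic, integral_div, hquant, div_self hq0.ne', hfdag_mass]
  have hg_mom : ∫ y, y * g y = (1 / q) * ∫ y in Iic yq, y * f y := by
    rw [hyg, integral_indicator measurableSet_Iic, integral_div, one_div_mul_eq_div]
  have hfdag_le : ∀ y ≤ yq, fdag y ≤ g y := fun y hy => by
    rw [hg, indicator_of_mem (mem_Iic.2 hy), le_div_iff₀ hq0]
    linarith [hmix y, mul_nonneg (sub_nonneg.2 hq1.le) (hfddag_nonneg y)]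
  have hfdag_ge : ∀ y > yq, g y ≤ fdag y := fun y hy => by
    rw [hg, indicator_of_notMem (notMem_Iic.2 hy)]; exact hfdag_nonneg y
  have hmass_gap : ∫ y in Ioi yq, (fdag y - g y) = ∫ y in Ioi yq, fdag y :=
    setIntegral_congr_fun measurableSet_Ioi fun y hy => by
      rw [hg, indicator_of_notMem (notMem_Iic.2 hy), sub_zero]
  rw [← hg_mom]
  exact integral_id_mul_lt_of_single_crossing hfdag_int
    ((hf_int.div_const q).indicator measurableSet_Iic) hfdag_mom
    (hyg ▸ (hf_mom.div_const q).indicator measurableSet_Iic) hg_mass.symm hfdag_le hfdag_ge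
    (hmass_gap ▸ hmass_above)

/-- Strict version of Lee's trimming lemma. -/
theorem lee_trimming_lower_strict
    (f fdag fddag : ℝ → ℝ) (q yq : ℝ)
    (hq : q ∈ Set.Ioo (0:ℝ) 1)
    (hf_nonneg : ∀ y, 0 ≤ f y) (hfdag_nonneg : ∀ y, 0 ≤ fdag y)
    (hfddag_nonneg : ∀ y, 0 ≤ fddag y)
    (hf_int : Integrable f) (hfdag_int : Integrable fdag) (hfddag_int : Integrable fddag)
    (hf_mass : ∫ y, f y = 1) (hfdag_mass : ∫ y, fdag y = 1)
    (hfddag_mass : ∫ y, fddag y = 1)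
    (hf_mom : Integrable (fun y => y * f y))
    (hfdag_mom : Integrable (fun y => y * fdag y))
    (hfddag_mom : Integrable (fun y => y * fddag y))
    (hmix : ∀ y, f y = q * fdag y + (1 - q) * fddag y)
    (hquant : ∫ y in Set.Iic yq, f y = q)
    (hpos : ∃ a b : ℝ, a < yq ∧ yq < b ∧ ∀ y ∈ Set.Ioo a b, 0 < f y)
    (hnondeg : ¬ ∃ m : ℝ, ∀ᵐ y ∂(volume.restrict (Set.Iic yq)), f y = 0 ∨ y = m)
    (hmass_above : 0 < ∫ y in Set.Ioi yq, fdag y) :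
    (1 / q) * ∫ y in Set.Iic yq, y * f y < ∫ y, y * fdag y :=
  lee_trimming_lower_strict_general f fdag fddag q yq hq hfdag_nonneg hfddag_nonneg hf_int hfdag_int
    hfdag_mass hf_mom hfdag_mom hmix hquant hmass_above
end
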